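/- Let q be an acyclic natural join query with connected join graph G_q, where each edge {R,S} of G_q is weighted by w(R,S) = |attr(R) ∩ attr(S)|. Then every join tree of q is a maximum spanning tree of the weighted graph G_q. -/

import Mathlib

namespace JoinQuery

universe u

variable {ι : Type} {α : Type}

/-- A *tuple* over a finite set `X` of attributes, with values in the domain `D`:
a function assigning a domain value to each attribute of `X`. -/
def Tuple (D : Type u) {α : Type} (X : Finset α) : Type u := {a // a ∈ X} → D

/-- Projection: the restriction of a tuple over `X` to a subset `Y ⊆ X` of the attributes. -/
def restrict {D : Type u} {X Y : Finset α} (h : Y ⊆ X) (t : Tuple D X) : Tuple D Y :=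
  fun a => t ⟨a.1, h a.2⟩

/-- A database instance for the natural join query whose relation symbols are the elements
of `ι` with attribute sets given by `attr`: a finite set of tuples for every relation. -/
structure Inst (attr : ι → Finset α) (D : Type u) where
  rel : ∀ R : ι, Set (Tuple D (attr R))
  finite : ∀ R : ι, (rel R).Finite

/-- The set of attributes of the (sub)query given by the set `S` of relations. -/
def attrsOf [DecidableEq α] (attr : ι → Finset α) (S : Finset ι) : Finset α :=
  S.biUnion attr

theorem attr_subset_attrsOf [DecidableEq α] (attr : ι → Finset α) {S : Finset ι} {R : ι}
    (hR : R ∈ S) : attr R ⊆ attrsOf attr S :=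
  Finset.subset_biUnion_of_mem attr hR

theorem attrsOf_mono [DecidableEq α] (attr : ι → Finset α) {S₁ S₂ : Finset ι} (h : S₁ ⊆ S₂) :
    attrsOf attr S₁ ⊆ attrsOf attr S₂ :=
  Finset.biUnion_subset_biUnion_of_subset_left attr h

/-- The output of the natural join of the relations in `S`, on the instance `I`:
all tuples over the attributes of `S` whose restriction to each relation `R ∈ S`
belongs to `I.rel R`. -/
def output [DecidableEq α] {D : Type u} (attr : ι → Finset α) (I : Inst attr D)
    (S : Finset ι) : Set (Tuple D (attrsOf attr S)) :=
  {t | ∀ (R : ι) (hR : R ∈ S), restrict (attr_subset_attrsOf attr hR) t ∈ I.rel R}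

/-- The output `q(I)` of the full query (the natural join of all relations). -/
def fullOutput [Fintype ι] [DecidableEq α] {D : Type u} (attr : ι → Finset α)
    (I : Inst attr D) : Set (Tuple D (attrsOf attr Finset.univ)) :=
  output attr I Finset.univ

/-- An instance is *fully reduced* if every relation equals the projection of the
full output onto its attributes. -/
def FullyReduced [Fintype ι] [DecidableEq α] {D : Type u} (attr : ι → Finset α)
    (I : Inst attr D) : Prop :=
  ∀ R : ι,
    I.rel R = restrict (attr_subset_attrsOf attr (Finset.mem_univ R)) '' fullOutput attr I

/-- The subjoin given by the set `S` of relations is *safe*: on every fully reduced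
instance, its output is the projection of the full output onto its attributes. -/
def Safe [Fintype ι] [DecidableEq α] (attr : ι → Finset α) (S : Finset ι) : Prop :=
  ∀ (D : Type u) (I : Inst attr D), FullyReduced attr I →
    output attr I S =
      restrict (attrsOf_mono attr (Finset.subset_univ S)) '' fullOutput attr I

/-- The *join graph* of the query: vertices are the relations, two distinct relations
being adjacent iff they share an attribute. -/
def joinGraph [DecidableEq α] (attr : ι → Finset α) : SimpleGraph ι where
  Adj R S := R ≠ S ∧ (attr R ∩ attr S).Nonempty
  symm := by
    refine ⟨fun R S h => ?_⟩
    exact ⟨h.1.symm, by rw [Finset.inter_comm]; exact h.2⟩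
  loopless := by refine ⟨fun R h => ?_⟩; exact h.1 rfl

/-- `T` is a spanning tree of the graph `G` (a tree on the same vertex set all of whose
edges are edges of `G`). -/
def IsSpanningTree (G T : SimpleGraph ι) : Prop :=
  T ≤ G ∧ T.IsTree

/-- `T` is a *join tree* of the query: a spanning tree of the join graph such that, for
every attribute `A` (occurring in the query), the relations containing `A` induce a
connected subgraph of `T`. -/
def IsJoinTree [DecidableEq α] (attr : ι → Finset α) (T : SimpleGraph ι) : Prop :=
  IsSpanningTree (joinGraph attr) T ∧
    ∀ A : α, (∃ R : ι, A ∈ attr R) → (T.induce {R : ι | A ∈ attr R}).Connected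

/-- The query is (α-)acyclic iff it has a join tree. -/
def Acyclic [DecidableEq α] (attr : ι → Finset α) : Prop :=
  ∃ T : SimpleGraph ι, IsJoinTree attr T

/-- The weight of an edge `{R, S}`: the number of shared attributes `|attr R ∩ attr S|`. -/
def edgeWeight [DecidableEq α] (attr : ι → Finset α) : Sym2 ι → ℕ :=
  Sym2.lift ⟨fun R S => (attr R ∩ attr S).card, fun R S => by simp [Finset.inter_comm]⟩

/-- The total weight of (the edges of) a graph `T`. -/
noncomputable def weight [DecidableEq α] (attr : ι → Finset α) (T : SimpleGraph ι) : ℕ :=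
  ∑ᶠ e ∈ T.edgeSet, edgeWeight attr e

/-- `T` is a maximum spanning tree of the weighted join graph. -/
def IsMaxSpanningTree [DecidableEq α] (attr : ι → Finset α) (T : SimpleGraph ι) : Prop :=
  IsSpanningTree (joinGraph attr) T ∧
    ∀ T' : SimpleGraph ι, IsSpanningTree (joinGraph attr) T' →
      weight attr T' ≤ weight attr T

/-- γ-acyclicity: α-acyclicity together with the absence of a γ-cycle of size 3,
i.e. of three distinct relations `R, S, T` and three distinct attributes `x, y, z`
with `x, y ∈ attr R`, `y, z ∈ attr S` and `x, y, z ∈ attr T`. -/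
def GammaAcyclic [DecidableEq α] (attr : ι → Finset α) : Prop :=
  Acyclic attr ∧
    ¬ ∃ (R S T : ι) (x y z : α),
        R ≠ S ∧ R ≠ T ∧ S ≠ T ∧ x ≠ y ∧ x ≠ z ∧ y ≠ z ∧
        x ∈ attr R ∧ y ∈ attr R ∧ y ∈ attr S ∧ z ∈ attr S ∧
        x ∈ attr T ∧ y ∈ attr T ∧ z ∈ attr T

/-- A *connected subjoin*: a nonempty set of relations inducing a connected subgraph
of the join graph. -/
def ConnectedSubjoin [DecidableEq α] (attr : ι → Finset α) (S : Finset ι) : Prop :=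
  S.Nonempty ∧ ((joinGraph attr).induce (S : Set ι)).Connected

/-- The number of edges of `T` whose both endpoints contain the attribute `A`. -/
noncomputable def eCount (attr : ι → Finset α) (T : SimpleGraph ι) (A : α) : ℕ :=
  {e ∈ T.edgeSet | ∀ R ∈ e, A ∈ attr R}.ncard

/-- The number of relations whose attribute set contains `A`. -/
noncomputable def nCount (attr : ι → Finset α) (A : α) : ℕ :=
  {R : ι | A ∈ attr R}.ncard

/-- A (binary) join expression over the relation symbols `ι`. -/
inductive JoinExpr (ι : Type) : Type where
  | leaf : ι → JoinExpr ι
  | node : JoinExpr ι → JoinExpr ι → JoinExpr ι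

namespace JoinExpr

/-- The list of leaves of a join expression. -/
def leaves {ι : Type} : JoinExpr ι → List ι
  | leaf R => [R]
  | node l r => l.leaves ++ r.leaves

/-- The set of relations appearing in a join expression. -/
def rels {ι : Type} [DecidableEq ι] : JoinExpr ι → Finset ι
  | leaf R => {R}
  | node l r => l.rels ∪ r.rels

/-- The leaves of the expression are exactly the relations of the query,
each occurring once. -/
def Complete {ι : Type} (θ : JoinExpr ι) : Prop :=
  θ.leaves.Nodup ∧ ∀ R : ι, R ∈ θ.leaves

/-- The expression has no Cartesian products: at every internal node, the relations of the
two subtrees are joined by at least one edge of `G`. -/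
def ConnectedExpr {ι : Type} [DecidableEq ι] (G : SimpleGraph ι) : JoinExpr ι → Prop
  | leaf _ => True
  | node l r =>
      (∃ R ∈ l.rels, ∃ S ∈ r.rels, G.Adj R S) ∧ ConnectedExpr G l ∧ ConnectedExpr G r

/-- The expression is *monotone* on the instance `I`: at every internal node
`θ' = θ'₁ ⋈ θ'₂`, the output of each child equals the projection of the output of the
node onto the child's attributes (no tuple of either input is removed by the join). -/
def MonotoneOn {ι α : Type} [DecidableEq ι] [DecidableEq α] {D : Type u}
    (attr : ι → Finset α) (I : Inst attr D) : JoinExpr ι → Prop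
  | leaf _ => True
  | node l r =>
      output attr I l.rels =
        restrict (attrsOf_mono attr Finset.subset_union_left) ''
          output attr I (l.rels ∪ r.rels) ∧
      output attr I r.rels =
        restrict (attrsOf_mono attr Finset.subset_union_right) ''
          output attr I (l.rels ∪ r.rels) ∧
      MonotoneOn attr I l ∧ MonotoneOn attr I r

end JoinExpr

/-- Two tuples (over possibly different attribute sets) *agree* on their common attributes. -/
def AgreeOn {α : Type} {D : Type u} {X Y : Finset α} (t : Tuple D X) (s : Tuple D Y) : Prop :=
  ∀ (a : α) (ha : a ∈ X) (hb : a ∈ Y), t ⟨a, ha⟩ = s ⟨a, hb⟩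

/-- The semi-join `R ⋉ S` on the instance `I`: the tuples of `I.rel R` having a match
in `I.rel S` (a tuple agreeing with them on `attr R ∩ attr S`). -/
def semiJoin {D : Type u} (attr : ι → Finset α) (I : Inst attr D) (R S : ι) :
    Set (Tuple D (attr R)) :=
  {t ∈ I.rel R | ∃ s ∈ I.rel S, AgreeOn t s}

/-- The instance obtained from `I` by replacing the content of relation `R` with the
semi-join `R ⋉ S` (all other relations unchanged). -/
def Inst.semiJoinUpdate [DecidableEq ι] {attr : ι → Finset α} {D : Type u}
    (I : Inst attr D) (R S : ι) : Inst attr D where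
  rel := Function.update I.rel R (semiJoin attr I R S)
  finite := by
    intro R'
    rcases eq_or_ne R' R with rfl | h
    · rw [Function.update_self]
      exact (I.finite R').subset fun t ht => ht.1
    · rw [Function.update_of_ne h]
      exact I.finite R'

/-- The forward pass of the semi-join phase: process the vertices in the order given by
the list `L`; when processing a vertex `R`, successively replace its content by `R ⋉ S`
for each of its children `S` (listed by `childList R`). -/
def forwardPass [DecidableEq ι] {attr : ι → Finset α} {D : Type u}
    (I : Inst attr D) (L : List ι) (childList : ι → List ι) : Inst attr D :=
  L.foldl (fun J R => (childList R).foldl (fun K S => K.semiJoinUpdate R S) J) I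

/-- The backward pass of the semi-join phase: process the vertices in the order given by
the list `L`; when processing a non-root vertex `R`, replace its content by `R ⋉ par R`. -/
def backwardPass [DecidableEq ι] {attr : ι → Finset α} {D : Type u}
    (I : Inst attr D) (L : List ι) (r : ι) (par : ι → ι) : Inst attr D :=
  L.foldl (fun J R => if R = r then J else J.semiJoinUpdate R (par R)) I

end JoinQuery

/-!
Weighing an edge by its shared attributes is the same as letting each attribute `A` count the
edges both of whose endpoints contain `A`. In any spanning tree these edges form a forest on the
`n_A` relations containing `A`, hence number at most `n_A - 1`; in a join tree they form a tree
on them, hence number exactly `n_A - 1`.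
-/

namespace SimpleGraph

variable {V : Type*} {G : SimpleGraph V}

theorem ncard_edgeSet_induce (G : SimpleGraph V) (s : Set V) :
    (G.induce s).edgeSet.ncard = {e ∈ G.edgeSet | ∀ v ∈ e, v ∈ s}.ncard := by
  rw [← Set.ncard_image_of_injective _ (Sym2.map.injective Subtype.val_injective)]
  congr 1
  ext e
  induction e using Sym2.ind with
  | _ a b =>
    simp only [Set.mem_image, Set.mem_ofPred_eq, mem_edgeSet, Sym2.mem_iff, forall_eq_or_imp,
      forall_eq]
    constructor
    · rintro ⟨e, he, hab⟩
      induction e using Sym2.ind with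
      | _ x y =>
        obtain ⟨rfl, rfl⟩ | ⟨rfl, rfl⟩ := Sym2.eq_iff.mp (Sym2.map_mk _ _ _ ▸ hab)
        · exact ⟨he, x.2, y.2⟩
        · exact ⟨he.symm, y.2, x.2⟩
    · rintro ⟨hab, ha, hb⟩
      exact ⟨s(⟨a, ha⟩, ⟨b, hb⟩), hab, rfl⟩

-- Extend `G` to a spanning tree of the complete graph.
theorem IsAcyclic.card_edgeSet_add_one_le [Finite V] [Nonempty V] (hG : G.IsAcyclic) :
    Nat.card G.edgeSet + 1 ≤ Nat.card V := by
  obtain ⟨F, hGF, -, hF⟩ := connected_top.exists_isTree_le_of_le_of_isAcyclic le_top hG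
  calc Nat.card G.edgeSet + 1 ≤ Nat.card F.edgeSet + 1 := by
        gcongr
        exact Nat.card_mono (Set.toFinite _) (edgeSet_mono hGF)
    _ = Nat.card V := (isTree_iff_connected_and_card.mp hF).2

end SimpleGraph

namespace JoinQuery

variable {ι α : Type}

theorem eCount_eq_ncard_edgeSet_induce (attr : ι → Finset α) (T : SimpleGraph ι) (A : α) :
    eCount attr T A = (T.induce {R | A ∈ attr R}).edgeSet.ncard :=
  (T.ncard_edgeSet_induce _).symm

theorem eCount_add_one_le_nCount [Finite ι] (attr : ι → Finset α) {T : SimpleGraph ι}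
    (hT : T.IsAcyclic) {A : α} (hA : ∃ R, A ∈ attr R) :
    eCount attr T A + 1 ≤ nCount attr A := by
  obtain ⟨R, hR⟩ := hA
  have : Nonempty {R | A ∈ attr R} := ⟨⟨R, hR⟩⟩
  rw [eCount_eq_ncard_edgeSet_induce]
  exact (hT.induce _).card_edgeSet_add_one_le

theorem nCount_le_eCount_add_one [Finite ι] (attr : ι → Finset α) {T : SimpleGraph ι} {A : α}
    (hA : (T.induce {R | A ∈ attr R}).Connected) :
    nCount attr A ≤ eCount attr T A + 1 := by
  rw [eCount_eq_ncard_edgeSet_induce]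
  exact hA.card_vert_le_card_edgeSet_add_one

theorem edgeWeight_eq_card_filter [Fintype ι] [DecidableEq ι] [DecidableEq α]
    (attr : ι → Finset α) (e : Sym2 ι) :
    edgeWeight attr e =
      ({A ∈ attrsOf attr Finset.univ | ∀ R ∈ e, A ∈ attr R} : Finset α).card := by
  induction e using Sym2.ind with
  | _ a b =>
    show (attr a ∩ attr b).card = _
    congr 1
    ext A
    simp only [Finset.mem_inter, Finset.mem_filter, attrsOf, Finset.mem_biUnion,
      Finset.mem_univ, true_and, Sym2.mem_iff, forall_eq_or_imp, forall_eq]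
    exact ⟨fun h => ⟨⟨a, h.1⟩, h⟩, And.right⟩

-- Double counting of the pairs (edge, shared attribute).
theorem weight_eq_sum_eCount [Fintype ι] [DecidableEq α] (attr : ι → Finset α)
    (T : SimpleGraph ι) :
    weight attr T = ∑ A ∈ attrsOf attr Finset.univ, eCount attr T A := by
  classical
  have hfin : T.edgeSet.Finite := Set.toFinite _
  rw [weight, finsum_mem_eq_finite_toFinset_sum _ hfin]
  simp only [edgeWeight_eq_card_filter]
  refine (Finset.sum_card_bipartiteAbove_eq_sum_card_bipartiteBelow
    (r := fun (e : Sym2 ι) A => ∀ R ∈ e, A ∈ attr R)).trans (Finset.sum_congr rfl fun A _ => ?_)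
  rw [eCount, Set.ncard_eq_toFinset_card _ (hfin.subset (Set.sep_subset _ _))]
  congr 1
  ext e
  simp [Finset.bipartiteBelow]

theorem joinTree_isMaxSpanningTree_general {ι α : Type} [Fintype ι] [DecidableEq α]
    (attr : ι → Finset α)
    (T : SimpleGraph ι) (hT : IsJoinTree attr T) :
    IsMaxSpanningTree attr T := by
  obtain ⟨hTspan, hTconn⟩ := hT
  refine ⟨hTspan, fun T' hT' => ?_⟩
  rw [weight_eq_sum_eCount, weight_eq_sum_eCount]
  refine Finset.sum_le_sum fun A hA => ?_
  have hA' : ∃ R, A ∈ attr R := by simpa [attrsOf] using hA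
  have hforest := eCount_add_one_le_nCount attr hT'.2.isAcyclic hA'
  have hconnected := nCount_le_eCount_add_one attr (hTconn A hA')
  omega

theorem joinTree_isMaxSpanningTree {ι α : Type} [Fintype ι] [DecidableEq α]
    (attr : ι → Finset α) (hattr : ∀ R : ι, (attr R).Nonempty)
    (hconn : (joinGraph attr).Connected)
    (hacyclic : Acyclic attr)
    (T : SimpleGraph ι) (hT : IsJoinTree attr T) :
    IsMaxSpanningTree attr T :=
  joinTree_isMaxSpanningTree_general attr T hT

end JoinQuery
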